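/- arXiv:1509.07812 — 10 statements merged into one kernel-verified Lean document; each statement's English description precedes it below -/
import Mathlib

section
/- Let Φ = (φ_n)_n and Ψ = (ψ_n)_n be two frames for H, with M_Ψ an upper frame (Bessel) bound for Ψ. Then Ψ is a generalized dual (g-dual) frame of Φ if and only if there exists an invertible bounded operator D on H such that T_Φ U_Ψ = S_Φ^{1/2} D and D D* ≤ M_Ψ · Id_H (as positive operators). -/
/-! Since `S_Φ = R²` is bounded below, `R` is invertible, and `D = R⁻¹ T_Φ U_Ψ` is invertible
exactly when `T_Φ U_Ψ` is. As `R² = U_Φ* U_Φ` and `R` is self-adjoint, `‖R f‖ = ‖U_Φ f‖`, so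
`U_Φ R⁻¹` is an isometry and `D* = T_Ψ (U_Φ R⁻¹)` has norm at most `‖T_Ψ‖ = ‖U_Ψ‖ ≤ √M_Ψ`;
in the C*-algebra `B(H)` this gives `D D* ≤ ‖D‖² ≤ M_Ψ`. -/

noncomputable section

open ContinuousLinearMap
open scoped ComplexInnerProductSpace ENNReal

variable {H : Type*} [NormedAddCommGroup H] [InnerProductSpace ℂ H] [CompleteSpace H]

/-- The sequence space `ℓ²(ℕ)`. -/
abbrev Ltwo : Type := lp (fun _ : ℕ => ℂ) 2

/-- `φ` is a Bessel sequence with Bessel bound `M`: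
`∑ₙ |⟨f, φₙ⟩|² ≤ M‖f‖²` for every `f`.  (Mathlib inner products are conjugate-linear in the
first slot, so `⟪φ n, f⟫` corresponds to the paper's `⟨f, φₙ⟩`.) -/
def IsBesselBound (φ : ℕ → H) (M : ℝ) : Prop :=
  ∀ f : H, Summable (fun n => ‖(⟪φ n, f⟫ : ℂ)‖ ^ 2) ∧
    ∑' n, ‖(⟪φ n, f⟫ : ℂ)‖ ^ 2 ≤ M * ‖f‖ ^ 2

/-- `φ` is a frame with lower frame bound `m` and upper (Bessel) bound `M`. -/
def IsFrameWith (φ : ℕ → H) (m M : ℝ) : Prop :=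
  0 < m ∧ IsBesselBound φ M ∧
    ∀ f : H, m * ‖f‖ ^ 2 ≤ ∑' n, ‖(⟪φ n, f⟫ : ℂ)‖ ^ 2

/-- `φ` is a frame for `H`. -/
def IsFrame (φ : ℕ → H) : Prop := ∃ m M, IsFrameWith φ m M

/-- `U` is the analysis operator of `φ` : `U f = (⟨f, φₙ⟩)ₙ`.
The synthesis operator is then `T_φ = adjoint U` and the frame operator is
`S_φ = adjoint U ∘L U`. -/
def IsAnalysisOp (φ : ℕ → H) (U : H →L[ℂ] Ltwo) : Prop :=
  ∀ (f : H) (n : ℕ), U f n = (⟪φ n, f⟫ : ℂ)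

namespace ContinuousLinearMap

section

variable {𝕜 E F : Type*} [RCLike 𝕜] [NormedAddCommGroup E] [NormedAddCommGroup F]
  [NormedSpace 𝕜 E] [NormedSpace 𝕜 F]

lemma opNorm_comp_le_one_of_norm_apply_eq {R S : E →L[𝕜] E} {U : E →L[𝕜] F}
    (hRU : ∀ x, ‖R x‖ = ‖U x‖) (hRS : R ∘L S = 1) : ‖U ∘L S‖ ≤ 1 :=
  opNorm_le_bound _ zero_le_one fun x => by
    rw [comp_apply, ← hRU, ← comp_apply, hRS, one_apply_eq_self, one_mul]

end

variable {𝕜 E F G : Type*} [RCLike 𝕜]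
  [NormedAddCommGroup E] [InnerProductSpace 𝕜 E] [CompleteSpace E]
  [NormedAddCommGroup F] [InnerProductSpace 𝕜 F] [CompleteSpace F]
  [NormedAddCommGroup G] [InnerProductSpace 𝕜 G] [CompleteSpace G]

lemma norm_apply_eq_of_adjoint_comp_self_eq {A : E →L[𝕜] F} {B : E →L[𝕜] G}
    (h : adjoint A ∘L A = adjoint B ∘L B) (x : E) : ‖A x‖ = ‖B x‖ := by
  rw [← sq_eq_sq₀ (norm_nonneg _) (norm_nonneg _), apply_norm_sq_eq_inner_adjoint_left,
    apply_norm_sq_eq_inner_adjoint_left, h]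

lemma isUnit_adjoint_comp_self_of_forall_le_norm_apply_sq {U : E →L[𝕜] F} {m : ℝ} (hm : 0 < m)
    (h : ∀ x, m * ‖x‖ ^ 2 ≤ ‖U x‖ ^ 2) : IsUnit (adjoint U ∘L U) :=
  isUnit_of_forall_le_norm_inner_map _ (c := ⟨m, hm.le⟩) hm fun x => by
    rw [mul_comm]
    exact (h x).trans ((apply_norm_sq_eq_inner_adjoint_left U x).le.trans (RCLike.re_le_norm _))

end ContinuousLinearMap

lemma Ltwo.norm_sq_eq_tsum (x : Ltwo) : ‖x‖ ^ 2 = ∑' n, ‖x n‖ ^ 2 := by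
  simpa only [ENNReal.toReal_ofNat, Real.rpow_two] using
    lp.norm_rpow_eq_tsum (p := 2) (by norm_num) x

namespace IsAnalysisOp

variable {E : Type*} [NormedAddCommGroup E] [InnerProductSpace ℂ E] {φ : ℕ → E}
  {U : E →L[ℂ] Ltwo}

lemma norm_sq_apply (hU : IsAnalysisOp φ U) (f : E) :
    ‖U f‖ ^ 2 = ∑' n, ‖(⟪φ n, f⟫ : ℂ)‖ ^ 2 := by
  rw [Ltwo.norm_sq_eq_tsum]
  exact tsum_congr fun n => by rw [hU f n]

lemma opNorm_sq_le [Nontrivial E] {M : ℝ} (hU : IsAnalysisOp φ U) (hφ : IsBesselBound φ M) :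
    ‖U‖ ^ 2 ≤ M := by
  have hbound (f : E) : ‖U f‖ ^ 2 ≤ M * ‖f‖ ^ 2 := hU.norm_sq_apply f ▸ (hφ f).2
  have hM : 0 ≤ M := by
    obtain ⟨f, hf⟩ := exists_ne (0 : E)
    exact nonneg_of_mul_nonneg_left ((sq_nonneg _).trans (hbound f)) (by positivity)
  rw [← Real.le_sqrt (norm_nonneg _) hM]
  refine opNorm_le_bound _ (Real.sqrt_nonneg M) fun f => ?_
  rw [← Real.sqrt_sq (norm_nonneg (U f)), ← Real.sqrt_sq (norm_nonneg f), ← Real.sqrt_mul hM]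
  exact Real.sqrt_le_sqrt (hbound f)

lemma isUnit_frameOp [CompleteSpace E] {m M : ℝ} (hU : IsAnalysisOp φ U)
    (hφ : IsFrameWith φ m M) : IsUnit (adjoint U ∘L U) :=
  isUnit_adjoint_comp_self_of_forall_le_norm_apply_sq hφ.1 fun f => hU.norm_sq_apply f ▸ hφ.2.2 f

end IsAnalysisOp

lemma isPositive_smul_one_sub_mul_adjoint {D : H →L[ℂ] H} {M : ℝ} (hD : ‖D‖ ^ 2 ≤ M) :
    ((M : ℂ) • (1 : H →L[ℂ] H) - D ∘L adjoint D).IsPositive := by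
  change D * star D ≤ (M : ℂ) • 1
  calc D * star D ≤ algebraMap ℝ (H →L[ℂ] H) (‖D‖ ^ 2) :=
        CStarAlgebra.mul_star_le_algebraMap_norm_sq
    _ ≤ algebraMap ℝ (H →L[ℂ] H) M := by gcongr
    _ = (M : ℂ) • 1 := by rw [Algebra.algebraMap_eq_smul_one, ← Complex.coe_smul]

/-- Let Φ, Ψ be frames for H with M_Ψ an upper (Bessel) bound for Ψ.  Then Ψ is a
g-dual frame of Φ (i.e. `T_Φ U_Ψ` is invertible) iff there is an invertible bounded operator
`D` with `T_Φ U_Ψ = S_Φ^{1/2} D` and `D D* ≤ M_Ψ · Id`.  Here the positive square root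
`S_Φ^{1/2}` is represented by the operator `R`, the unique positive operator with
`R ∘L R = S_Φ = adjoint Uφ ∘L Uφ`. -/
theorem statement0 (φ ψ : ℕ → H) (mφ Mφ mψ Mψ : ℝ)
    (hφ : IsFrameWith φ mφ Mφ) (hψ : IsFrameWith ψ mψ Mψ)
    (Uφ Uψ : H →L[ℂ] Ltwo) (hUφ : IsAnalysisOp φ Uφ) (hUψ : IsAnalysisOp ψ Uψ)
    (R : H →L[ℂ] H) (hRpos : R.IsPositive) (hRsq : R ∘L R = adjoint Uφ ∘L Uφ) :
    IsUnit (adjoint Uφ ∘L Uψ) ↔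
      ∃ D : H →L[ℂ] H, IsUnit D ∧ adjoint Uφ ∘L Uψ = R ∘L D ∧
        ((Mψ : ℂ) • (1 : H →L[ℂ] H) - D ∘L adjoint D).IsPositive := by
  have hR : IsUnit R := (isUnit_pow_iff two_ne_zero).mp (by
    rw [pow_two, mul_def, hRsq]; exact hUφ.isUnit_frameOp hφ)
  refine ⟨fun hT => ?_, fun ⟨D, hD, hTD, _⟩ => hTD ▸ hR.mul hD⟩
  -- On the zero space the Bessel bound `Mψ` may be negative, so `‖Uψ‖ ^ 2 ≤ Mψ` can fail there.
  rcases subsingleton_or_nontrivial H with _ | _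
  · refine ⟨1, isUnit_one, Subsingleton.elim _ _, ?_⟩
    rw [Subsingleton.elim (_ - _) 0]
    exact isPositive_zero
  have hRR : R * Ring.inverse R = 1 := Ring.mul_inverse_cancel R hR
  refine ⟨Ring.inverse R * (adjoint Uφ ∘L Uψ), hR.ringInverse.mul hT, ?_,
    isPositive_smul_one_sub_mul_adjoint ?_⟩
  · rw [← mul_def, ← mul_assoc, hRR, one_mul]
  have hRUφ : ∀ x, ‖R x‖ = ‖Uφ x‖ :=
    norm_apply_eq_of_adjoint_comp_self_eq (by rw [← hRsq, hRpos.isSelfAdjoint.adjoint_eq])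
  have hstar :
      star (Ring.inverse R * (adjoint Uφ ∘L Uψ)) = adjoint Uψ ∘L (Uφ ∘L Ring.inverse R) := by
    rw [star_mul, hRpos.isSelfAdjoint.ringInverse.star_eq, star_eq_adjoint, adjoint_comp,
      adjoint_adjoint]
    rfl
  calc ‖Ring.inverse R * (adjoint Uφ ∘L Uψ)‖ ^ 2
        = ‖adjoint Uψ ∘L (Uφ ∘L Ring.inverse R)‖ ^ 2 := by rw [← hstar, norm_star]
    _ ≤ (‖Uψ‖ * 1) ^ 2 := by
        grw [opNorm_comp_le, LinearIsometryEquiv.norm_map,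
          opNorm_comp_le_one_of_norm_apply_eq hRUφ hRR]
    _ ≤ Mψ := by rw [mul_one]; exact hUψ.opNorm_sq_le hψ.2.1
end
end

section
/- Let Φ = (φ_n)_n and Ψ = (ψ_n)_n be two frames for H, with M_Ψ an upper frame (Bessel) bound for Ψ. Then Ψ is an approximately dual frame of Φ if and only if there exists a bounded operator D on H such that T_Φ U_Ψ = S_Φ^{1/2} D, D D* ≤ M_Ψ · Id_H (as positive operators), and ‖Id_H − S_Φ^{1/2} D‖ < 1. -/
noncomputable section

open ContinuousLinearMap
open scoped ComplexInnerProductSpace ENNReal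

variable {H : Type*} [NormedAddCommGroup H] [InnerProductSpace ℂ H] [CompleteSpace H]

/-!
`S_Φ = R²` is bounded below by the lower frame bound of `Φ`, so `R` is invertible and
`D = R⁻¹ T_Φ U_Ψ` is forced. From `R² = U_Φ* U_Φ` we get `‖U_Φ w‖ = ‖R w‖`, and
`D* R = (R D)* = U_Ψ* U_Φ` then gives `‖D*‖ ≤ ‖U_Ψ‖ ≤ √M_Ψ`, i.e. `D D* ≤ M_Ψ`.
The converse is immediate since `R D = T_Φ U_Ψ`.
-/

section Operators

variable {𝕜 E F : Type*} [RCLike 𝕜]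
  [NormedAddCommGroup E] [InnerProductSpace 𝕜 E] [CompleteSpace E]
  [NormedAddCommGroup F] [InnerProductSpace 𝕜 F] [CompleteSpace F]

namespace ContinuousLinearMap

theorem norm_apply_eq_of_comp_self_eq_adjoint_comp {R : E →L[𝕜] E} (hR : IsSelfAdjoint R)
    {A : E →L[𝕜] F} (h : R ∘L R = adjoint A ∘L A) (x : E) : ‖A x‖ = ‖R x‖ := by
  have hsq : ‖A x‖ ^ 2 = ‖R x‖ ^ 2 := by
    rw [apply_norm_sq_eq_inner_adjoint_left, apply_norm_sq_eq_inner_adjoint_left, ← h,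
      hR.adjoint_eq]
  exact (sq_eq_sq₀ (norm_nonneg _) (norm_nonneg _)).1 hsq

theorem isUnit_of_comp_self_eq_adjoint_comp {R : E →L[𝕜] E} {A : E →L[𝕜] F}
    (h : R ∘L R = adjoint A ∘L A) {m : ℝ} (hm : 0 < m) (hA : ∀ x, m * ‖x‖ ^ 2 ≤ ‖A x‖ ^ 2) :
    IsUnit R := by
  have hRR : IsUnit (R ∘L R) := by
    refine isUnit_of_forall_le_norm_inner_map _ (c := m.toNNReal) (by simpa using hm) fun x => ?_
    calc ‖x‖ ^ 2 * m.toNNReal = m * ‖x‖ ^ 2 := by rw [Real.coe_toNNReal _ hm.le, mul_comm]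
      _ ≤ ‖A x‖ ^ 2 := hA x
      _ = RCLike.re (inner 𝕜 ((R ∘L R) x) x) := by rw [h, apply_norm_sq_eq_inner_adjoint_left]
      _ ≤ ‖inner 𝕜 ((R ∘L R) x) x‖ := RCLike.re_le_norm _
  exact (isUnit_pow_iff two_ne_zero).1 (by rwa [sq])

theorem norm_le_of_comp_eq_adjoint_comp {R : E →L[𝕜] E} (hR : IsSelfAdjoint R)
    (hsurj : Function.Surjective R) {A B : E →L[𝕜] F} (hRA : R ∘L R = adjoint A ∘L A)
    {D : E →L[𝕜] E} (hD : adjoint A ∘L B = R ∘L D) : ‖D‖ ≤ ‖B‖ := by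
  rw [← LinearIsometryEquiv.norm_map adjoint D]
  refine opNorm_le_bound _ (norm_nonneg _) fun x => ?_
  obtain ⟨w, rfl⟩ := hsurj x
  have hDR : adjoint D (R w) = adjoint B (A w) := by
    conv_lhs => rw [← hR.adjoint_eq]
    rw [← comp_apply, ← adjoint_comp, ← hD, adjoint_comp, adjoint_adjoint, comp_apply]
  calc ‖adjoint D (R w)‖ = ‖adjoint B (A w)‖ := by rw [hDR]
    _ ≤ ‖adjoint B‖ * ‖A w‖ := le_opNorm _ _
    _ = ‖B‖ * ‖R w‖ := by
      rw [LinearIsometryEquiv.norm_map, norm_apply_eq_of_comp_self_eq_adjoint_comp hR hRA]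

theorem isPositive_smul_one_sub_comp_adjoint {A : E →L[𝕜] F} {M : ℝ} (hA : ‖A‖ ^ 2 ≤ M) :
    ((M : 𝕜) • (1 : F →L[𝕜] F) - A ∘L adjoint A).IsPositive := by
  have hM : IsSelfAdjoint ((M : 𝕜) • (1 : F →L[𝕜] F)) :=
    IsSelfAdjoint.smul (RCLike.conj_ofReal M) (.one _)
  refine isPositive_def'.2 ⟨hM.sub (isPositive_self_comp_adjoint A).isSelfAdjoint, fun x => ?_⟩
  have hAx : ‖adjoint A x‖ ^ 2 = RCLike.re (inner 𝕜 ((A ∘L adjoint A) x) x) := by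
    rw [apply_norm_sq_eq_inner_adjoint_left, adjoint_adjoint]
  have hbound : ‖adjoint A x‖ ^ 2 ≤ M * ‖x‖ ^ 2 :=
    calc ‖adjoint A x‖ ^ 2 ≤ (‖A‖ * ‖x‖) ^ 2 := by
          gcongr
          simpa only [LinearIsometryEquiv.norm_map] using le_opNorm (adjoint A) x
      _ ≤ M * ‖x‖ ^ 2 := by rw [mul_pow]; gcongr
  simp only [reApplyInnerSelf_apply, sub_apply, smul_apply, one_apply_eq_self, inner_sub_left,
    inner_smul_left, RCLike.conj_ofReal, map_sub, RCLike.re_ofReal_mul, inner_self_eq_norm_sq,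
    ← hAx]
  linarith

end ContinuousLinearMap

end Operators

section Frames

variable {E : Type*} [NormedAddCommGroup E] [InnerProductSpace ℂ E]

theorem IsAnalysisOp.norm_sq_apply_s1 {φ : ℕ → E} {U : E →L[ℂ] Ltwo} (hU : IsAnalysisOp φ U)
    (f : E) : ‖U f‖ ^ 2 = ∑' n, ‖(⟪φ n, f⟫ : ℂ)‖ ^ 2 := by
  have h := lp.norm_rpow_eq_tsum (p := 2) (by norm_num) (U f)
  simp only [ENNReal.toReal_ofNat, Real.rpow_two] at h
  simp_rw [h, hU f]

theorem IsBesselBound.nonneg {φ : ℕ → E} {M : ℝ} (hB : IsBesselBound φ M) {f : E}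
    (hf : f ≠ 0) : 0 ≤ M := by
  have := (tsum_nonneg fun n => sq_nonneg ‖(⟪φ n, f⟫ : ℂ)‖).trans (hB f).2
  exact nonneg_of_mul_nonneg_left this (by positivity)

theorem IsAnalysisOp.opNorm_sq_le_s1 [Nontrivial E] {φ : ℕ → E} {U : E →L[ℂ] Ltwo} {M : ℝ}
    (hU : IsAnalysisOp φ U) (hB : IsBesselBound φ M) : ‖U‖ ^ 2 ≤ M := by
  obtain ⟨f, hf⟩ := exists_ne (0 : E)
  have hM := hB.nonneg hf
  rw [← Real.le_sqrt (norm_nonneg _) hM]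
  refine opNorm_le_bound _ (Real.sqrt_nonneg _) fun g => ?_
  rw [← Real.sqrt_sq (norm_nonneg (U g)), ← Real.sqrt_sq (norm_nonneg g), ← Real.sqrt_mul hM]
  exact Real.sqrt_le_sqrt (by rw [hU.norm_sq_apply_s1]; exact (hB g).2)

end Frames

/-- Let Φ, Ψ be frames for H with M_Ψ an upper (Bessel) bound for Ψ.  Then Ψ is an
approximately dual frame of Φ (i.e. `‖Id - T_Φ U_Ψ‖ < 1`) iff there is a bounded operator `D`
with `T_Φ U_Ψ = S_Φ^{1/2} D`, `D D* ≤ M_Ψ · Id` and `‖Id - S_Φ^{1/2} D‖ < 1`.  Here `R` is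
the positive square root of the frame operator `S_Φ = adjoint Uφ ∘L Uφ`. -/
theorem statement1 (φ ψ : ℕ → H) (mφ Mφ mψ Mψ : ℝ)
    (hφ : IsFrameWith φ mφ Mφ) (hψ : IsFrameWith ψ mψ Mψ)
    (Uφ Uψ : H →L[ℂ] Ltwo) (hUφ : IsAnalysisOp φ Uφ) (hUψ : IsAnalysisOp ψ Uψ)
    (R : H →L[ℂ] H) (hRpos : R.IsPositive) (hRsq : R ∘L R = adjoint Uφ ∘L Uφ) :
    ‖(1 : H →L[ℂ] H) - adjoint Uφ ∘L Uψ‖ < 1 ↔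
      ∃ D : H →L[ℂ] H, adjoint Uφ ∘L Uψ = R ∘L D ∧
        ((Mψ : ℂ) • (1 : H →L[ℂ] H) - D ∘L adjoint D).IsPositive ∧
        ‖(1 : H →L[ℂ] H) - R ∘L D‖ < 1 := by
  refine ⟨fun h => ?_, fun ⟨D, hD, _, h⟩ => hD ▸ h⟩
  -- On `H = 0` the Bessel bound `Mψ` may be negative, so `‖Uψ‖ ^ 2 ≤ Mψ` is not available there.
  rcases subsingleton_or_nontrivial H with _ | _
  · refine ⟨0, Subsingleton.elim _ _, ?_, by simp⟩
    convert isPositive_zero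
    exact Subsingleton.elim _ _
  obtain ⟨u, rfl⟩ : IsUnit R := isUnit_of_comp_self_eq_adjoint_comp hRsq hφ.1
    fun f => (hUφ.norm_sq_apply_s1 f).symm ▸ hφ.2.2 f
  set D : H →L[ℂ] H := ↑u⁻¹ ∘L (adjoint Uφ ∘L Uψ)
  have hD : adjoint Uφ ∘L Uψ = u ∘L D := (u.mul_inv_cancel_left _).symm
  refine ⟨D, hD, isPositive_smul_one_sub_comp_adjoint ?_, hD ▸ h⟩
  calc ‖D‖ ^ 2 ≤ ‖Uψ‖ ^ 2 := by
        gcongr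
        exact norm_le_of_comp_eq_adjoint_comp hRpos.isSelfAdjoint
          (isUnit_iff_bijective.1 u.isUnit).2 hRsq hD
    _ ≤ Mψ := hUψ.opNorm_sq_le_s1 hψ.2.1
end
end

section
/- Let Φ = (φ_n)_n be a frame for H. A sequence Φ^{ad} = (φ^{ad}_n)_n in H is an approximately dual frame of Φ if and only if there exist a bounded operator Θ : H → ℓ²(ℕ) with T_Φ ∘ Θ = 0 and a bounded operator D on H with ‖Id_H − S_Φ^{1/2} D‖ < 1 such that φ^{ad}_n = D* S_Φ^{-1/2} φ_n + Θ*(δ_n) for all n ∈ ℕ. In this case, T_Φ U_{Φ^{ad}} = S_Φ^{1/2} D. -/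
noncomputable section

open ContinuousLinearMap
open scoped ComplexInnerProductSpace ENNReal

variable {H : Type*} [NormedAddCommGroup H] [InnerProductSpace ℂ H] [CompleteSpace H]

lemma adjoint_single' {ψ : ℕ → H} {W : H →L[ℂ] Ltwo} (hW : IsAnalysisOp ψ W) (n : ℕ) :
    adjoint W (lp.single 2 n (1:ℂ)) = ψ n := by
  apply ext_inner_right ℂ
  intro f
  rw [adjoint_inner_left, lp.inner_single_left]
  simp [hW f n]

lemma analysis_unique' {ψ : ℕ → H} {W W' : H →L[ℂ] Ltwo}
    (hW : IsAnalysisOp ψ W) (hW' : IsAnalysisOp ψ W') : W = W' := by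
  ext f n
  rw [hW f n, hW' f n]

lemma bessel_of_analysis' {ψ : ℕ → H} {W : H →L[ℂ] Ltwo} (hW : IsAnalysisOp ψ W) :
    IsBesselBound ψ (‖W‖ ^ 2) := by
  intro f
  have h2 : ((2:ℝ≥0∞)).toReal = 2 := by norm_num
  have hpow : ∀ x : ℝ, x ^ ((2:ℝ≥0∞)).toReal = x ^ (2:ℕ) := fun x => by
    rw [h2, show (2:ℝ) = ((2:ℕ):ℝ) by norm_num, Real.rpow_natCast]
  have hmem := lp.memℓp (W f)
  have hsum := hmem.summable (by rw [h2]; norm_num)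
  have heq : (fun n => ‖(⟪ψ n, f⟫ : ℂ)‖ ^ 2) = fun n => ‖(W f) n‖ ^ ((2:ℝ≥0∞)).toReal := by
    funext n
    rw [hpow, hW f n]
  constructor
  · rw [heq]; exact hsum
  · rw [heq, ← lp.norm_rpow_eq_tsum (by rw [h2]; norm_num) (W f), hpow]
    calc ‖W f‖ ^ (2:ℕ) ≤ (‖W‖ * ‖f‖) ^ (2:ℕ) := by
          apply pow_le_pow_left₀ (norm_nonneg _) (W.le_opNorm f)
      _ = ‖W‖ ^ 2 * ‖f‖ ^ 2 := by ring


/-- Let Φ be a frame for H, with positive square root `R` of the frame operator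
(`R ∘L R = S_Φ`) and `Rinv = S_Φ^{-1/2}` its inverse.  A sequence Φᵃᵈ is an approximately
dual frame of Φ (a Bessel sequence whose analysis operator `V` satisfies
`‖Id - T_Φ V‖ < 1`) iff there are a bounded `Θ : H → ℓ²` with `T_Φ ∘ Θ = 0` and a bounded
`D` with `‖Id - R D‖ < 1` such that `φᵃᵈₙ = D* S_Φ^{-1/2} φₙ + Θ*(δₙ)` for all n; and in
this case `T_Φ U_{Φᵃᵈ} = S_Φ^{1/2} D`. -/
theorem statement2 (φ : ℕ → H) (hφ : IsFrame φ)
    (Uφ : H →L[ℂ] Ltwo) (hUφ : IsAnalysisOp φ Uφ)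
    (R Rinv : H →L[ℂ] H) (hRpos : R.IsPositive) (hRsq : R ∘L R = adjoint Uφ ∘L Uφ)
    (hR1 : R ∘L Rinv = 1) (hR2 : Rinv ∘L R = 1)
    (φad : ℕ → H) :
    (∃ (M : ℝ) (V : H →L[ℂ] Ltwo), IsBesselBound φad M ∧ IsAnalysisOp φad V ∧
        ‖(1 : H →L[ℂ] H) - adjoint Uφ ∘L V‖ < 1) ↔
      ∃ (Θ : H →L[ℂ] Ltwo) (D : H →L[ℂ] H),
        adjoint Uφ ∘L Θ = 0 ∧
        ‖(1 : H →L[ℂ] H) - R ∘L D‖ < 1 ∧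
        (∀ n : ℕ, φad n = adjoint D (Rinv (φ n)) + adjoint Θ (lp.single 2 n 1)) ∧
        (∀ V : H →L[ℂ] Ltwo, IsAnalysisOp φad V → adjoint Uφ ∘L V = R ∘L D) := by
  have hRsa : adjoint R = R := hRpos.isSelfAdjoint.adjoint_eq
  have hRinvsa : adjoint Rinv = Rinv := by
    have h1 : adjoint Rinv ∘L R = 1 := by
      rw [← hRsa, ← adjoint_comp, hR1, one_def, adjoint_id]
    ext x
    have e1 : adjoint Rinv (R (Rinv x)) = Rinv x := by
      have := DFunLike.congr_fun h1 (Rinv x); simpa using this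
    have e2 : R (Rinv x) = x := by
      have := DFunLike.congr_fun hR1 x; simpa using this
    rw [← e1, e2]
  constructor
  · rintro ⟨M, V, _, hV, hnorm⟩
    set D : H →L[ℂ] H := Rinv ∘L (adjoint Uφ ∘L V) with hD
    set Θ : H →L[ℂ] Ltwo := V - Uφ ∘L (Rinv ∘L D) with hΘd
    have hRD : R ∘L D = adjoint Uφ ∘L V := by
      rw [hD, ← comp_assoc, hR1, one_def, id_comp]
    refine ⟨Θ, D, ?_, ?_, ?_, ?_⟩
    · rw [hΘd, comp_sub, ← comp_assoc (adjoint Uφ) Uφ (Rinv ∘L D), ← hRsq,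
        comp_assoc R R (Rinv ∘L D), ← comp_assoc R Rinv D, hR1, one_def, id_comp, hRD, sub_self]
    · rw [hRD]; exact hnorm
    · intro n
      have key : adjoint (Uφ ∘L (Rinv ∘L D)) (lp.single 2 n (1:ℂ)) = adjoint D (Rinv (φ n)) := by
        rw [adjoint_comp, adjoint_comp, hRinvsa, comp_apply, comp_apply, adjoint_single' hUφ]
      rw [hΘd, map_sub, sub_apply, adjoint_single' hV, key]
      abel
    · intro V' hV'
      rw [analysis_unique' hV' hV, hRD]
  · rintro ⟨Θ, D, hΘ, hlt, hform, hall⟩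
    have hVan : IsAnalysisOp φad ((Uφ ∘L (Rinv ∘L D)) + Θ) := by
      intro f n
      have hadj : adjoint ((Uφ ∘L (Rinv ∘L D)) + Θ) (lp.single 2 n (1:ℂ)) = φad n := by
        rw [map_add, adjoint_comp, adjoint_comp, hRinvsa]
        rw [add_apply, comp_apply, comp_apply, adjoint_single' hUφ]
        exact (hform n).symm
      calc (((Uφ ∘L (Rinv ∘L D)) + Θ) f) n
          = ⟪lp.single 2 n (1:ℂ), ((Uφ ∘L (Rinv ∘L D)) + Θ) f⟫ := by
            rw [lp.inner_single_left]; simp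
        _ = ⟪adjoint ((Uφ ∘L (Rinv ∘L D)) + Θ) (lp.single 2 n (1:ℂ)), f⟫ :=
            (adjoint_inner_left _ _ _).symm
        _ = ⟪φad n, f⟫ := by rw [hadj]
    exact ⟨_, _, bessel_of_analysis' hVan, hVan, by rw [hall _ hVan]; exact hlt⟩
end
end

section
/- Let Φ = (φ_n)_n be a frame for H with upper frame (Bessel) bound M_Φ, and let D be a bounded operator on H such that ‖S_Φ^{-1/2} − D‖ < 1/√M_Φ. Then for every bounded operator Θ : H → ℓ²(ℕ) with T_Φ ∘ Θ = 0, the sequence Φ^{ad} = (D* S_Φ^{-1/2} φ_n + Θ*(δ_n))_n is an approximately dual frame of Φ, and T_Φ U_{Φ^{ad}} = S_Φ^{1/2} D. -/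
noncomputable section

open ContinuousLinearMap
open scoped ComplexInnerProductSpace ENNReal

variable {H : Type*} [NormedAddCommGroup H] [InnerProductSpace ℂ H] [CompleteSpace H]

/-- norm-squared formula in `ℓ²`. -/
lemma ltwo_norm_sq (g : Ltwo) :
    (Summable fun n => ‖g n‖ ^ 2) ∧ ‖g‖ ^ 2 = ∑' n, ‖g n‖ ^ 2 := by
  have hp : (0:ℝ) < (2 : ℝ≥0∞).toReal := by norm_num
  have h1 := lp.memℓp g
  rw [memℓp_gen_iff hp] at h1
  have h2 := lp.norm_rpow_eq_tsum hp g
  simp only [ENNReal.toReal_ofNat, Real.rpow_two] at h1 h2 ⊢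
  exact ⟨h1, h2⟩

/-- Let Φ be a frame with upper (Bessel) bound M_Φ, `R` the positive square root
of its frame operator and `Rinv = S_Φ^{-1/2}`.  If `D` is bounded with
`‖S_Φ^{-1/2} - D‖ < 1/√M_Φ`, then for every bounded `Θ` with `T_Φ ∘ Θ = 0`, the sequence
`φᵃᵈₙ = D* S_Φ^{-1/2} φₙ + Θ*(δₙ)` is an approximately dual frame of Φ with
`T_Φ U_{Φᵃᵈ} = S_Φ^{1/2} D`. -/
theorem statement3 (φ : ℕ → H) (mφ Mφ : ℝ) (hφ : IsFrameWith φ mφ Mφ)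
    (Uφ : H →L[ℂ] Ltwo) (hUφ : IsAnalysisOp φ Uφ)
    (R Rinv : H →L[ℂ] H) (hRpos : R.IsPositive) (hRsq : R ∘L R = adjoint Uφ ∘L Uφ)
    (hR1 : R ∘L Rinv = 1) (hR2 : Rinv ∘L R = 1)
    (D : H →L[ℂ] H) (hD : ‖Rinv - D‖ < 1 / Real.sqrt Mφ)
    (Θ : H →L[ℂ] Ltwo) (hΘ : adjoint Uφ ∘L Θ = 0)
    (φad : ℕ → H)
    (hφad : ∀ n : ℕ, φad n = adjoint D (Rinv (φ n)) + adjoint Θ (lp.single 2 n 1)) :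
    ∃ (M : ℝ) (V : H →L[ℂ] Ltwo), IsBesselBound φad M ∧ IsAnalysisOp φad V ∧
      ‖(1 : H →L[ℂ] H) - adjoint Uφ ∘L V‖ < 1 ∧
      adjoint Uφ ∘L V = R ∘L D := by
  -- Rinv is self-adjoint
  have hRsa : adjoint R = R := isSelfAdjoint_iff'.1 hRpos.isSelfAdjoint
  have hRinvsa : adjoint Rinv = Rinv := by
    have h1 : adjoint Rinv ∘L R = 1 := by
      have := congrArg adjoint hR1
      have h0 : adjoint (1 : H →L[ℂ] H) = 1 := by rw [show (1 : H →L[ℂ] H) = ContinuousLinearMap.id ℂ H from rfl, adjoint_id]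
      rwa [adjoint_comp, hRsa, h0] at this
    calc adjoint Rinv = adjoint Rinv ∘L (R ∘L Rinv) := by rw [hR1]; ext x; simp
      _ = (adjoint Rinv ∘L R) ∘L Rinv := by rw [comp_assoc]
      _ = Rinv := by rw [h1]; ext x; simp
  set V : H →L[ℂ] Ltwo := Uφ ∘L (Rinv ∘L D) + Θ with hV
  -- V is the analysis operator of φad
  have hVan : IsAnalysisOp φad V := by
    intro f n
    have h1 : (V f) n = Uφ (Rinv (D f)) n + Θ f n := rfl
    rw [h1, hUφ, hφad]
    rw [inner_add_left, adjoint_inner_left, adjoint_inner_left]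
    rw [lp.inner_single_left]
    have : (⟪Rinv (φ n), D f⟫ : ℂ) = ⟪φ n, Rinv (D f)⟫ := by
      rw [← adjoint_inner_right, hRinvsa]
    rw [this]
    simp
  -- key composition identity
  have hcomp : adjoint Uφ ∘L V = R ∘L D := by
    rw [hV, comp_add, hΘ, add_zero, ← comp_assoc, ← hRsq]
    rw [comp_assoc R R (Rinv ∘L D), ← comp_assoc R Rinv D, hR1]
    ext x; simp
  -- Mφ > 0
  have hMpos : 0 < Real.sqrt Mφ := by
    by_contra h
    push_neg at h
    have : Real.sqrt Mφ = 0 := le_antisymm h (Real.sqrt_nonneg _)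
    rw [this] at hD
    simp at hD
    exact absurd hD (not_lt.2 (norm_nonneg _))
  -- ‖Uφ‖ ≤ √Mφ
  have hUnorm : ‖Uφ‖ ≤ Real.sqrt Mφ := by
    refine opNorm_le_bound _ (Real.sqrt_nonneg _) fun f => ?_
    have h1 : ‖Uφ f‖ ^ 2 ≤ Mφ * ‖f‖ ^ 2 := by
      rw [(ltwo_norm_sq (Uφ f)).2]
      have := (hφ.2.1 f).2
      calc ∑' n, ‖(Uφ f) n‖ ^ 2 = ∑' n, ‖(⟪φ n, f⟫ : ℂ)‖ ^ 2 := by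
            congr 1; ext n; rw [hUφ]
        _ ≤ Mφ * ‖f‖ ^ 2 := this
    have hM0 : (0:ℝ) < Mφ := Real.sqrt_pos.1 hMpos
    have h2 : Mφ * ‖f‖ ^ 2 = (Real.sqrt Mφ * ‖f‖) ^ 2 := by
      rw [mul_pow, Real.sq_sqrt hM0.le]
    nlinarith [norm_nonneg (Uφ f), Real.sqrt_nonneg Mφ, norm_nonneg f,
        mul_nonneg (Real.sqrt_nonneg Mφ) (norm_nonneg f)]
  -- ‖R‖ ≤ √Mφ
  have hRnorm : ‖R‖ ≤ Real.sqrt Mφ := by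
    have h1 : ‖R ∘L R‖ = ‖R‖ * ‖R‖ := by
      nth_rewrite 1 [← hRsa]
      exact norm_adjoint_comp_self R
    have h2 : ‖R ∘L R‖ = ‖Uφ‖ * ‖Uφ‖ := by
      rw [hRsq]
      exact norm_adjoint_comp_self Uφ
    have h3 : ‖R‖ = ‖Uφ‖ :=
      (mul_self_inj (norm_nonneg R) (norm_nonneg Uφ)).1 (h1.symm.trans h2)
    exact h3.le.trans hUnorm
  -- the norm estimate
  have hnorm : ‖(1 : H →L[ℂ] H) - adjoint Uφ ∘L V‖ < 1 := by
    rw [hcomp]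
    have h1 : (1 : H →L[ℂ] H) - R ∘L D = R ∘L (Rinv - D) := by
      rw [comp_sub, hR1]
    rw [h1]
    calc ‖R ∘L (Rinv - D)‖ ≤ ‖R‖ * ‖Rinv - D‖ := opNorm_comp_le _ _
      _ ≤ Real.sqrt Mφ * ‖Rinv - D‖ := by
          exact mul_le_mul_of_nonneg_right hRnorm (norm_nonneg _)
      _ < Real.sqrt Mφ * (1 / Real.sqrt Mφ) := by
          exact mul_lt_mul_of_pos_left hD hMpos
      _ = 1 := by field_simp
  refine ⟨‖V‖ ^ 2, V, ?_, hVan, hnorm, hcomp⟩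
  intro f
  obtain ⟨hs, he⟩ := ltwo_norm_sq (V f)
  have hVf : ∀ n, ‖(⟪φad n, f⟫ : ℂ)‖ ^ 2 = ‖(V f) n‖ ^ 2 := fun n => by rw [hVan]
  constructor
  · exact hs.congr fun n => (hVf n).symm
  · calc ∑' n, ‖(⟪φad n, f⟫ : ℂ)‖ ^ 2 = ∑' n, ‖(V f) n‖ ^ 2 := by
          congr 1; ext n; rw [hVf]
      _ = ‖V f‖ ^ 2 := he.symm
      _ ≤ (‖V‖ * ‖f‖) ^ 2 := pow_le_pow_left₀ (norm_nonneg _) (V.le_opNorm f) 2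
      _ = ‖V‖ ^ 2 * ‖f‖ ^ 2 := mul_pow _ _ _
end
end

section
/- Let Φ = (φ_n)_n be a frame for H with upper frame (Bessel) bound M_Φ and let Φ^d = (φ^d_n)_n be a dual frame of Φ. Then for each bounded operator D on H with ‖S_Φ^{-1/2} − D‖ < 1/√M_Φ, the sequence Φ^{ad} = (D* S_Φ^{-1/2} φ_n − φ_n + S_Φ(φ^d_n))_n is an approximately dual frame of Φ, and T_Φ U_{Φ^{ad}} = S_Φ^{1/2} D. -/
/-! The analysis operator of `φᵃᵈ` is `U_Φ (S^{-1/2})* D - U_Φ + U_{Φᵈ} S_Φ`, so by duality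
`T_Φ U_{Φᵃᵈ} = S_Φ S^{-1/2} D - S_Φ + S_Φ = S^{1/2} D`. Hence `Id - T_Φ U_{Φᵃᵈ}` factors as
`S^{1/2} (S^{-1/2} - D)`, and `‖S^{1/2}‖ = ‖U_Φ‖ ≤ √M_Φ` by the C*-identity. -/

noncomputable section

open ContinuousLinearMap
open scoped ComplexInnerProductSpace ENNReal

variable {H : Type*} [NormedAddCommGroup H] [InnerProductSpace ℂ H] [CompleteSpace H]

theorem lp.hasSum_norm_sq {ι : Type*} {E : ι → Type*} [∀ i, NormedAddCommGroup (E i)]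
    (x : lp E 2) : HasSum (fun i => ‖x i‖ ^ 2) (‖x‖ ^ 2) := by
  simpa using lp.hasSum_norm (p := 2) (by norm_num) x

theorem IsSelfAdjoint.of_mul_eq_one {M : Type*} [Monoid M] [StarMul M] {a b : M}
    (ha : IsSelfAdjoint a) (h : a * b = 1) : IsSelfAdjoint b := by
  have hleft : star b * a = 1 := by rw [← ha.star_eq, ← star_mul, h, star_one]
  calc star b = star b * (a * b) := by rw [h, mul_one]
    _ = b := by rw [← mul_assoc, hleft, one_mul]

theorem norm_one_sub_mul_lt_one {A : Type*} [NormedRing A] {r s d : A} {c : ℝ}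
    (hrs : r * s = 1) (hr : ‖r‖ ≤ c) (hd : ‖s - d‖ < 1 / c) : ‖1 - r * d‖ < 1 := by
  have hc : 0 < c := one_div_pos.mp ((norm_nonneg _).trans_lt hd)
  calc ‖1 - r * d‖ = ‖r * (s - d)‖ := by rw [mul_sub, hrs]
    _ ≤ ‖r‖ * ‖s - d‖ := norm_mul_le _ _
    _ ≤ c * ‖s - d‖ := by gcongr
    _ < c * (1 / c) := by gcongr
    _ = 1 := mul_one_div_cancel hc.ne'

theorem ContinuousLinearMap.norm_eq_of_comp_self_eq_adjoint_comp_self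
    {E F : Type*} [NormedAddCommGroup E] [InnerProductSpace ℂ E] [CompleteSpace E]
    [NormedAddCommGroup F] [InnerProductSpace ℂ F] [CompleteSpace F]
    {R : E →L[ℂ] E} {U : E →L[ℂ] F} (hR : IsSelfAdjoint R) (h : R ∘L R = adjoint U ∘L U) :
    ‖R‖ = ‖U‖ := by
  refine (mul_self_inj (norm_nonneg _) (norm_nonneg _)).1 ?_
  rw [← norm_adjoint_comp_self, ← norm_adjoint_comp_self, hR.adjoint_eq, h]

namespace IsAnalysisOp

variable {E : Type*} [NormedAddCommGroup E] [InnerProductSpace ℂ E] {φ ψ : ℕ → E}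
  {U V : E →L[ℂ] Ltwo}

theorem hasSum_norm_sq (hU : IsAnalysisOp φ U) (f : E) :
    HasSum (fun n => ‖(⟪φ n, f⟫ : ℂ)‖ ^ 2) (‖U f‖ ^ 2) := by
  simpa only [hU f] using lp.hasSum_norm_sq (U f)

theorem isBesselBound (hU : IsAnalysisOp φ U) : IsBesselBound φ (‖U‖ ^ 2) := fun f =>
  ⟨(hU.hasSum_norm_sq f).summable, by
    rw [(hU.hasSum_norm_sq f).tsum_eq, ← mul_pow]
    gcongr
    exact U.le_opNorm f⟩

theorem norm_le_sqrt (hU : IsAnalysisOp φ U) {M : ℝ} (hM : IsBesselBound φ M) : ‖U‖ ≤ √M :=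
  U.opNorm_le_bound (Real.sqrt_nonneg M) fun f => by
    have hsq : ‖U f‖ ^ 2 ≤ M * ‖f‖ ^ 2 := (hU.hasSum_norm_sq f).tsum_eq ▸ (hM f).2
    calc ‖U f‖ = √(‖U f‖ ^ 2) := (Real.sqrt_sq (norm_nonneg _)).symm
      _ ≤ √(M * ‖f‖ ^ 2) := Real.sqrt_le_sqrt hsq
      _ = √M * ‖f‖ := by rw [Real.sqrt_mul' _ (by positivity), Real.sqrt_sq (norm_nonneg f)]

theorem add (hU : IsAnalysisOp φ U) (hV : IsAnalysisOp ψ V) : IsAnalysisOp (φ + ψ) (U + V) :=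
  fun f n => by simp [hU f n, hV f n]

theorem sub (hU : IsAnalysisOp φ U) (hV : IsAnalysisOp ψ V) : IsAnalysisOp (φ - ψ) (U - V) :=
  fun f n => by simp [hU f n, hV f n]

theorem comp_adjoint [CompleteSpace E] (hU : IsAnalysisOp φ U) (A : E →L[ℂ] E) :
    IsAnalysisOp (fun n => A (φ n)) (U ∘L adjoint A) :=
  fun f n => by rw [comp_apply, hU, adjoint_inner_right]

end IsAnalysisOp

theorem statement5_general (φ φd : ℕ → H) (mφ Mφ : ℝ) (hφ : IsFrameWith φ mφ Mφ)
    (Uφ Uφd : H →L[ℂ] Ltwo) (hUφ : IsAnalysisOp φ Uφ) (hUφd : IsAnalysisOp φd Uφd)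
    (hdual : adjoint Uφ ∘L Uφd = 1)
    (R Rinv : H →L[ℂ] H) (hRpos : R.IsPositive) (hRsq : R ∘L R = adjoint Uφ ∘L Uφ)
    (hR1 : R ∘L Rinv = 1)
    (D : H →L[ℂ] H) (hD : ‖Rinv - D‖ < 1 / Real.sqrt Mφ)
    (φad : ℕ → H)
    (hφad : ∀ n : ℕ, φad n = adjoint D (Rinv (φ n)) - φ n + (adjoint Uφ ∘L Uφ) (φd n)) :
    ∃ (M : ℝ) (V : H →L[ℂ] Ltwo), IsBesselBound φad M ∧ IsAnalysisOp φad V ∧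
      ‖(1 : H →L[ℂ] H) - adjoint Uφ ∘L V‖ < 1 ∧
      adjoint Uφ ∘L V = R ∘L D := by
  set S := adjoint Uφ ∘L Uφ with hS
  have hV : IsAnalysisOp φad (Uφ ∘L adjoint (adjoint D ∘L Rinv) - Uφ + Uφd ∘L adjoint S) := by
    have : φad = (fun n => (adjoint D ∘L Rinv) (φ n)) - φ + fun n => S (φd n) := funext hφad
    rw [this]
    exact ((hUφ.comp_adjoint _).sub hUφ).add (hUφd.comp_adjoint S)
  have hRinv : IsSelfAdjoint Rinv := hRpos.isSelfAdjoint.of_mul_eq_one hR1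
  have hSsa : adjoint S = S := by rw [hS, adjoint_comp, adjoint_adjoint]
  have hkey : adjoint Uφ ∘L (Uφ ∘L adjoint (adjoint D ∘L Rinv) - Uφ + Uφd ∘L adjoint S)
      = R ∘L D :=
    calc _ = S ∘L Rinv ∘L D - S + (adjoint Uφ ∘L Uφd) ∘L S := by
          rw [adjoint_comp, adjoint_adjoint, hRinv.adjoint_eq, hSsa, comp_add, comp_sub]; rfl
      _ = R ∘L (R ∘L Rinv) ∘L D := by rw [hdual, ← hRsq, one_def, id_comp, sub_add_cancel]; rfl
      _ = R ∘L D := by rw [hR1, one_def, id_comp]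
  have hR : ‖R‖ ≤ √Mφ :=
    (norm_eq_of_comp_self_eq_adjoint_comp_self hRpos.isSelfAdjoint hRsq).trans_le
      (hUφ.norm_le_sqrt hφ.2.1)
  refine ⟨_, _, hV.isBesselBound, hV, ?_, hkey⟩
  rw [hkey]
  exact norm_one_sub_mul_lt_one hR1 hR hD

/-- Let Φ be a frame with upper bound M_Φ and Φᵈ a dual frame of Φ (so that
`T_Φ U_{Φᵈ} = Id`).  Let `R` be the positive square root of the frame operator and
`Rinv = S_Φ^{-1/2}`.  Then for every bounded `D` with `‖S_Φ^{-1/2} - D‖ < 1/√M_Φ`, the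
sequence `φᵃᵈₙ = D* S_Φ^{-1/2} φₙ - φₙ + S_Φ(φᵈₙ)` is an approximately dual frame of Φ with
`T_Φ U_{Φᵃᵈ} = S_Φ^{1/2} D`. -/
theorem statement5 (φ φd : ℕ → H) (mφ Mφ : ℝ) (hφ : IsFrameWith φ mφ Mφ) (hφd : IsFrame φd)
    (Uφ Uφd : H →L[ℂ] Ltwo) (hUφ : IsAnalysisOp φ Uφ) (hUφd : IsAnalysisOp φd Uφd)
    (hdual : adjoint Uφ ∘L Uφd = 1)
    (R Rinv : H →L[ℂ] H) (hRpos : R.IsPositive) (hRsq : R ∘L R = adjoint Uφ ∘L Uφ)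
    (hR1 : R ∘L Rinv = 1) (hR2 : Rinv ∘L R = 1)
    (D : H →L[ℂ] H) (hD : ‖Rinv - D‖ < 1 / Real.sqrt Mφ)
    (φad : ℕ → H)
    (hφad : ∀ n : ℕ, φad n = adjoint D (Rinv (φ n)) - φ n + (adjoint Uφ ∘L Uφ) (φd n)) :
    ∃ (M : ℝ) (V : H →L[ℂ] Ltwo), IsBesselBound φad M ∧ IsAnalysisOp φad V ∧
      ‖(1 : H →L[ℂ] H) - adjoint Uφ ∘L V‖ < 1 ∧
      adjoint Uφ ∘L V = R ∘L D :=
  statement5_general φ φd mφ Mφ hφ Uφ Uφd hUφ hUφd hdual R Rinv hRpos hRsq hR1 D hD φad hφad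
end
end

section
/- Let Φ = (φ_n)_n be a frame for H with a dual frame Φ^d = (φ^d_n)_n, and let A be a bounded operator on H with ‖Id_H − A‖ < 1. Then the sequence Φ^{ad} = (φ^{ad}_n)_n defined by φ^{ad}_n = A* S_Φ^{-1} φ_n − φ_n + S_Φ(φ^d_n) is an approximately dual frame of Φ, and T_Φ U_{Φ^{ad}} = A. -/
noncomputable section

open ContinuousLinearMap
open scoped ComplexInnerProductSpace ENNReal

variable {H : Type*} [NormedAddCommGroup H] [InnerProductSpace ℂ H] [CompleteSpace H]

/-- Let Φ be a frame with a dual frame Φᵈ (so `T_Φ U_{Φᵈ} = Id`), let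
`Sinv = S_Φ^{-1}`, and let `A` be bounded with `‖Id - A‖ < 1`.  Then the sequence
`φᵃᵈₙ = A* S_Φ^{-1} φₙ - φₙ + S_Φ(φᵈₙ)` is an approximately dual frame of Φ with
`T_Φ U_{Φᵃᵈ} = A`. -/
theorem statement6 (φ φd : ℕ → H) (hφ : IsFrame φ) (hφd : IsFrame φd)
    (Uφ Uφd : H →L[ℂ] Ltwo) (hUφ : IsAnalysisOp φ Uφ) (hUφd : IsAnalysisOp φd Uφd)
    (hdual : adjoint Uφ ∘L Uφd = 1)
    (Sinv : H →L[ℂ] H)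
    (hS1 : (adjoint Uφ ∘L Uφ) ∘L Sinv = 1) (hS2 : Sinv ∘L (adjoint Uφ ∘L Uφ) = 1)
    (A : H →L[ℂ] H) (hA : ‖(1 : H →L[ℂ] H) - A‖ < 1)
    (φad : ℕ → H)
    (hφad : ∀ n : ℕ, φad n = adjoint A (Sinv (φ n)) - φ n + (adjoint Uφ ∘L Uφ) (φd n)) :
    ∃ (M : ℝ) (V : H →L[ℂ] Ltwo), IsBesselBound φad M ∧ IsAnalysisOp φad V ∧
      ‖(1 : H →L[ℂ] H) - adjoint Uφ ∘L V‖ < 1 ∧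
      adjoint Uφ ∘L V = A := by

  classical
  set S : H →L[ℂ] H := adjoint Uφ ∘L Uφ with hSdef
  have hSadj : adjoint S = S := by
    rw [hSdef, adjoint_comp, adjoint_adjoint]
  have hSinvadj : adjoint Sinv = Sinv := by
    have h2 : S ∘L adjoint Sinv = 1 := by
      have := congrArg adjoint hS2
      rw [adjoint_comp, hSadj] at this
      rw [this, one_def, adjoint_id]
    calc adjoint Sinv = 1 ∘L adjoint Sinv := by rw [one_def, id_comp]
      _ = (Sinv ∘L S) ∘L adjoint Sinv := by rw [hS2]
      _ = Sinv ∘L (S ∘L adjoint Sinv) := by rw [comp_assoc]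
      _ = Sinv := by rw [h2, one_def, comp_id]
  set V : H →L[ℂ] Ltwo := Uφ ∘L (Sinv ∘L A) - Uφ + Uφd ∘L S with hVdef
  have hanalysis : IsAnalysisOp φad V := by
    intro f n
    have h1 : V f = Uφ (Sinv (A f)) - Uφ f + Uφd (S f) := by simp [hVdef]
    have h2 : (V f) n = (Uφ (Sinv (A f))) n - (Uφ f) n + (Uφd (S f)) n := by
      rw [h1, lp.coeFn_add, lp.coeFn_sub]; rfl
    rw [h2, hUφ, hUφ, hUφd, hφad]
    have ha : (⟪φ n, Sinv (A f)⟫ : ℂ) = ⟪adjoint A (Sinv (φ n)), f⟫ := by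
      rw [adjoint_inner_left]
      calc (⟪φ n, Sinv (A f)⟫ : ℂ) = ⟪adjoint Sinv (φ n), A f⟫ := by
            rw [adjoint_inner_left]
        _ = ⟪Sinv (φ n), A f⟫ := by rw [hSinvadj]
    have hb : (⟪φd n, S f⟫ : ℂ) = ⟪S (φd n), f⟫ := by
      conv_rhs => rw [← hSadj]
      rw [adjoint_inner_left]
    rw [ha, hb, inner_add_left, inner_sub_left]
  have hTV : adjoint Uφ ∘L V = A := by
    rw [hVdef, comp_add, comp_sub, ← comp_assoc, ← comp_assoc, ← hSdef, ← comp_assoc,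
      hdual, hS1]
    simp only [one_def, ContinuousLinearMap.id_comp]
    abel
  refine ⟨‖V‖ ^ 2, V, ?_, hanalysis, ?_, hTV⟩
  · intro f
    have hcoe : ∀ n, ‖(⟪φad n, f⟫ : ℂ)‖ ^ 2 = ‖(V f) n‖ ^ 2 := by
      intro n; rw [hanalysis f n]
    have hmem : Memℓp (fun n => (V f) n) 2 := lp.memℓp (V f)
    have htwo : ((2 : ℝ≥0∞)).toReal = 2 := by norm_num
    have hsum : Summable (fun n => ‖(V f) n‖ ^ (2 : ℝ)) := by
      have := hmem.summable (p := 2) (by norm_num)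
      rwa [htwo] at this
    have hsum' : Summable (fun n => ‖(V f) n‖ ^ (2 : ℕ)) := by
      convert hsum using 2 with n
      rw [← Real.rpow_natCast]; norm_num
    constructor
    · refine hsum'.congr ?_
      intro n; rw [hcoe n]
    · have hnorm : ‖V f‖ ^ (2 : ℝ) = ∑' n, ‖(V f) n‖ ^ (2 : ℝ) := by
        have := lp.norm_rpow_eq_tsum (p := 2) (by norm_num) (V f)
        rwa [htwo] at this
      have heq : ∑' n, ‖(⟪φad n, f⟫ : ℂ)‖ ^ 2 = ‖V f‖ ^ 2 := by
        rw [tsum_congr hcoe]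
        have : ‖V f‖ ^ (2 : ℕ) = ‖V f‖ ^ (2 : ℝ) := by
          rw [← Real.rpow_natCast]; norm_num
        rw [this, hnorm]
        apply tsum_congr
        intro n; rw [← Real.rpow_natCast]; norm_num
      rw [heq]
      calc ‖V f‖ ^ 2 ≤ (‖V‖ * ‖f‖) ^ 2 := by
            apply pow_le_pow_left₀ (norm_nonneg _) (V.le_opNorm f)
        _ = ‖V‖ ^ 2 * ‖f‖ ^ 2 := by ring
  · rw [hTV]; exact hA
end
end

section
/- Let Φ = (φ_n)_n and Ψ = (ψ_n)_n be two frames for H and let Φ^{ad} = (φ^{ad}_n)_n be a fixed approximately dual frame of Φ. Then there exist constants ε > 0 and C > 0 (depending only on Φ, Ψ and Φ^{ad}) with the following property: if the difference sequence Φ − Ψ = (φ_n − ψ_n)_n is a Bessel sequence with Bessel bound M_{Φ−Ψ} ≤ ε, then there exists an approximately dual frame Ψ^{ad} = (ψ^{ad}_n)_n of Ψ such that T_Ψ U_{Ψ^{ad}} = T_Φ U_{Φ^{ad}} and the sequence Φ^{ad} − Ψ^{ad} = (φ^{ad}_n − ψ^{ad}_n)_n is a Bessel sequence with Bessel bound at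 most C · M_{Φ−Ψ}. -/
noncomputable section

open ContinuousLinearMap
open scoped ComplexInnerProductSpace ENNReal

variable {H : Type*} [NormedAddCommGroup H] [InnerProductSpace ℂ H] [CompleteSpace H]

/-!
Since `Ψ` is a frame, `U_Ψ` is bounded below, so `S_Ψ = T_Ψ U_Ψ` is invertible and
`R = U_Ψ S_Ψ⁻¹` is a bounded right inverse of `T_Ψ`. Correcting `U_{Φᵃᵈ}` by
`X = R (T_Ψ - T_Φ) U_{Φᵃᵈ}` gives `V = U_{Φᵃᵈ} - X` with `T_Ψ V = T_Φ U_{Φᵃᵈ}`, so the sequence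
`Ψᵃᵈ` with analysis operator `V` is approximately dual to `Ψ`; it is a frame because `T_Ψ V` is
invertible, which forces `V` to be bounded below. Finally `Φᵃᵈ - Ψᵃᵈ` has analysis operator `X`,
and `‖X‖² ≤ ‖R‖² ‖U_{Φᵃᵈ}‖² ‖U_Φ - U_Ψ‖² ≤ ‖R‖² ‖U_{Φᵃᵈ}‖² M_{Φ-Ψ}`.
-/

section OperatorBounds

variable {𝕜 E F G : Type*}

section Normed

variable [NontriviallyNormedField 𝕜] [NormedAddCommGroup E] [NormedSpace 𝕜 E]
  [NormedAddCommGroup F] [NormedSpace 𝕜 F]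

theorem ContinuousLinearMap.exists_pos_mul_norm_le_of_isUnit_comp {B : F →L[𝕜] E}
    {V : E →L[𝕜] F} (h : IsUnit (B ∘L V)) : ∃ c > 0, ∀ x, c * ‖x‖ ≤ ‖V x‖ := by
  obtain ⟨u, hu⟩ := h
  refine antilipschitzWith_iff_exists_mul_le_norm.mp
    ⟨‖(↑u⁻¹ : E →L[𝕜] E)‖₊ * ‖B‖₊, V.antilipschitz_of_bound fun x => ?_⟩
  calc ‖x‖ = ‖(↑u⁻¹ : E →L[𝕜] E) (B (V x))‖ := by
        rw [← comp_apply B V, ← hu, ← comp_apply, ← mul_def, u.inv_mul, one_apply_eq_self]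
    _ ≤ ‖(↑u⁻¹ : E →L[𝕜] E)‖ * (‖B‖ * ‖V x‖) :=
        (le_opNorm _ _).trans (mul_le_mul_of_nonneg_left (le_opNorm _ _) (norm_nonneg _))
    _ = _ := by push_cast; ring

theorem ContinuousLinearMap.opNorm_sq_le_of_forall_norm_apply_sq_le {T : E →L[𝕜] F} {M : ℝ}
    (hM : 0 ≤ M) (h : ∀ x, ‖T x‖ ^ 2 ≤ M * ‖x‖ ^ 2) : ‖T‖ ^ 2 ≤ M := by
  have hT : ‖T‖ ≤ √M := T.opNorm_le_bound (Real.sqrt_nonneg M) fun x => by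
    rw [← pow_le_pow_iff_left₀ (norm_nonneg _) (by positivity) two_ne_zero, mul_pow,
      Real.sq_sqrt hM]
    exact h x
  calc ‖T‖ ^ 2 ≤ √M ^ 2 := by gcongr
    _ = M := Real.sq_sqrt hM

end Normed

section InnerProduct

variable [RCLike 𝕜] [NormedAddCommGroup E] [InnerProductSpace 𝕜 E] [CompleteSpace E]
  [NormedAddCommGroup F] [InnerProductSpace 𝕜 F] [CompleteSpace F]
  [NormedAddCommGroup G] [NormedSpace 𝕜 G]

theorem ContinuousLinearMap.norm_comp_adjoint_comp_apply_sq_le {D A : E →L[𝕜] F} {M K : ℝ}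
    (hD : ∀ x, ‖D x‖ ^ 2 ≤ M * ‖x‖ ^ 2) (B : E →L[𝕜] G) (hK : ‖B‖ * ‖A‖ ≤ K) (x : E) :
    ‖(B ∘L adjoint D ∘L A) x‖ ^ 2 ≤ K ^ 2 * M * ‖x‖ ^ 2 := by
  rcases eq_or_ne x 0 with rfl | hx
  · simp
  have hM : 0 ≤ M := nonneg_of_mul_nonneg_left ((sq_nonneg _).trans (hD x)) (by positivity)
  have hD' : ‖adjoint D‖ ^ 2 ≤ M := by
    rw [adjoint.norm_map]
    exact opNorm_sq_le_of_forall_norm_apply_sq_le hM hD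
  have hop : ‖B ∘L adjoint D ∘L A‖ ≤ ‖B‖ * (‖adjoint D‖ * ‖A‖) :=
    (opNorm_comp_le _ _).trans (by gcongr; exact opNorm_comp_le _ _)
  calc ‖(B ∘L adjoint D ∘L A) x‖ ^ 2 ≤ (‖B‖ * (‖adjoint D‖ * ‖A‖) * ‖x‖) ^ 2 := by
        gcongr
        exact (le_opNorm _ x).trans (by gcongr)
    _ = (‖B‖ * ‖A‖) ^ 2 * ‖adjoint D‖ ^ 2 * ‖x‖ ^ 2 := by ring
    _ ≤ K ^ 2 * M * ‖x‖ ^ 2 := by gcongr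

theorem ContinuousLinearMap.exists_adjoint_comp_eq_one {U : E →L[𝕜] F} {m : ℝ} (hm : 0 < m)
    (h : ∀ x, m * ‖x‖ ^ 2 ≤ ‖U x‖ ^ 2) : ∃ R : E →L[𝕜] F, adjoint U ∘L R = 1 := by
  have hinner : ∀ x, ‖x‖ ^ 2 * m.toNNReal ≤ ‖inner 𝕜 ((adjoint U ∘L U) x) x‖ := fun x => by
    rw [comp_apply, adjoint_inner_left, inner_self_eq_norm_sq_to_K, norm_pow, RCLike.norm_ofReal,
      abs_norm, Real.coe_toNNReal _ hm.le, mul_comm]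
    exact h x
  obtain ⟨u, hu⟩ := isUnit_of_forall_le_norm_inner_map _ (Real.toNNReal_pos.mpr hm) hinner
  refine ⟨U ∘L ↑u⁻¹, ?_⟩
  rw [← comp_assoc, ← hu]
  exact u.mul_inv

end InnerProduct

end OperatorBounds

theorem Ltwo.hasSum_norm_sq (c : Ltwo) : HasSum (fun n => ‖c n‖ ^ 2) (‖c‖ ^ 2) := by
  simpa only [ENNReal.toReal_ofNat, Real.rpow_two] using lp.hasSum_norm (p := 2) (by norm_num) c

theorem isAnalysisOp_adjoint_single (A : H →L[ℂ] Ltwo) :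
    IsAnalysisOp (fun n => adjoint A (lp.single 2 n 1)) A := fun f n => by
  rw [adjoint_inner_left, lp.inner_single_left]
  simp

namespace IsAnalysisOp

variable {E : Type*} [NormedAddCommGroup E] [InnerProductSpace ℂ E] {θ η : ℕ → E}
  {U W : E →L[ℂ] Ltwo}

theorem sub_s7 (hU : IsAnalysisOp θ U) (hW : IsAnalysisOp η W) :
    IsAnalysisOp (fun n => θ n - η n) (U - W) := fun f n => by
  rw [sub_apply, lp.coeFn_sub, Pi.sub_apply, hU, hW, inner_sub_left]

theorem hasSum (hU : IsAnalysisOp θ U) (f : E) :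
    HasSum (fun n => ‖(⟪θ n, f⟫ : ℂ)‖ ^ 2) (‖U f‖ ^ 2) := by
  simpa only [hU f] using Ltwo.hasSum_norm_sq (U f)

theorem isBesselBound_iff (hU : IsAnalysisOp θ U) {M : ℝ} :
    IsBesselBound θ M ↔ ∀ f, ‖U f‖ ^ 2 ≤ M * ‖f‖ ^ 2 := by
  simp only [IsBesselBound, (hU.hasSum _).tsum_eq, (hU.hasSum _).summable, true_and]

theorem isFrame {c : ℝ} (hU : IsAnalysisOp θ U) (hc : 0 < c) (h : ∀ f, c * ‖f‖ ≤ ‖U f‖) :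
    IsFrame θ := by
  refine ⟨c ^ 2, ‖U‖ ^ 2, by positivity, hU.isBesselBound_iff.mpr fun f => ?_, fun f => ?_⟩
  · rw [← mul_pow]
    gcongr
    exact le_opNorm U f
  · rw [(hU.hasSum f).tsum_eq, ← mul_pow]
    gcongr
    exact h f

theorem exists_pos_mul_norm_sq_le (hU : IsAnalysisOp θ U) (hθ : IsFrame θ) :
    ∃ m > 0, ∀ f, m * ‖f‖ ^ 2 ≤ ‖U f‖ ^ 2 := by
  obtain ⟨m, -, hm, -, hlow⟩ := hθ
  exact ⟨m, hm, fun f => (hU.hasSum f).tsum_eq ▸ hlow f⟩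

end IsAnalysisOp

theorem statement7_general (φ ψ φad : ℕ → H) (hψ : IsFrame ψ)
    (Uφ Uψ Vad : H →L[ℂ] Ltwo)
    (hUφ : IsAnalysisOp φ Uφ) (hUψ : IsAnalysisOp ψ Uψ)
    (hVad : IsAnalysisOp φad Vad)
    (had : ‖(1 : H →L[ℂ] H) - adjoint Uφ ∘L Vad‖ < 1) :
    ∃ ε > (0 : ℝ), ∃ C > (0 : ℝ), ∀ M' : ℝ,
      IsBesselBound (fun n => φ n - ψ n) M' → M' ≤ ε →
      ∃ (ψad : ℕ → H) (V : H →L[ℂ] Ltwo),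
        IsFrame ψad ∧ IsAnalysisOp ψad V ∧
        ‖(1 : H →L[ℂ] H) - adjoint Uψ ∘L V‖ < 1 ∧
        adjoint Uψ ∘L V = adjoint Uφ ∘L Vad ∧
        IsBesselBound (fun n => φad n - ψad n) (C * M') := by
  obtain ⟨m, hm, hψlow⟩ := hUψ.exists_pos_mul_norm_sq_le hψ
  obtain ⟨R, hR⟩ := exists_adjoint_comp_eq_one hm hψlow
  refine ⟨1, one_pos, (‖R‖ * ‖Vad‖ + 1) ^ 2, by positivity, fun M' hB _ => ?_⟩
  set X := R ∘L adjoint (Uψ - Uφ) ∘L Vad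
  have hsynth : adjoint Uψ ∘L (Vad - X) = adjoint Uφ ∘L Vad := by
    rw [comp_sub, ← comp_assoc, hR, one_def, id_comp, map_sub, sub_comp]
    abel
  have hunit : IsUnit (adjoint Uψ ∘L (Vad - X)) := by
    simpa only [hsynth, sub_sub_cancel] using isUnit_one_sub_of_norm_lt_one had
  obtain ⟨c, hc, hlow⟩ := exists_pos_mul_norm_le_of_isUnit_comp hunit
  have hψad := hVad.sub_s7 (isAnalysisOp_adjoint_single X)
  refine ⟨_, _, hψad.isFrame hc hlow, hψad, hsynth ▸ had, hsynth, ?_⟩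
  have hD : ∀ f, ‖(Uψ - Uφ) f‖ ^ 2 ≤ M' * ‖f‖ ^ 2 := fun f => by
    simpa only [sub_apply, norm_sub_rev] using (hUφ.sub_s7 hUψ).isBesselBound_iff.mp hB f
  refine (hVad.sub_s7 hψad).isBesselBound_iff.mpr fun f => ?_
  rw [sub_sub_cancel]
  exact norm_comp_adjoint_comp_apply_sq_le hD R (by linarith) f

/-- Let Φ, Ψ be frames for H and Φᵃᵈ a fixed approximately dual frame of Φ
(a Bessel sequence with analysis operator `Vad` such that `‖Id - T_Φ Vad‖ < 1`).  Then there
are constants ε, C > 0 such that whenever Φ - Ψ is a Bessel sequence with bound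
`M' ≤ ε`, there is an approximately dual frame Ψᵃᵈ of Ψ (with analysis operator `V`) such
that `T_Ψ U_{Ψᵃᵈ} = T_Φ U_{Φᵃᵈ}` and Φᵃᵈ - Ψᵃᵈ is a Bessel sequence with bound `C * M'`. -/
theorem statement7 (φ ψ φad : ℕ → H) (hφ : IsFrame φ) (hψ : IsFrame ψ)
    (Uφ Uψ Vad : H →L[ℂ] Ltwo)
    (hUφ : IsAnalysisOp φ Uφ) (hUψ : IsAnalysisOp ψ Uψ)
    (Mad : ℝ) (hadB : IsBesselBound φad Mad) (hVad : IsAnalysisOp φad Vad)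
    (had : ‖(1 : H →L[ℂ] H) - adjoint Uφ ∘L Vad‖ < 1) :
    ∃ ε > (0 : ℝ), ∃ C > (0 : ℝ), ∀ M' : ℝ,
      IsBesselBound (fun n => φ n - ψ n) M' → M' ≤ ε →
      ∃ (ψad : ℕ → H) (V : H →L[ℂ] Ltwo),
        IsFrame ψad ∧ IsAnalysisOp ψad V ∧
        ‖(1 : H →L[ℂ] H) - adjoint Uψ ∘L V‖ < 1 ∧
        adjoint Uψ ∘L V = adjoint Uφ ∘L Vad ∧
        IsBesselBound (fun n => φad n - ψad n) (C * M') :=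
  statement7_general φ ψ φad hψ Uφ Uψ Vad hUφ hUψ hVad had
end
end

section
/- Let Φ = (φ_n)_n and Ψ = (ψ_n)_n be two frames for H such that Range(U_Φ) ⊆ Range(U_Ψ) (as subspaces of ℓ²(ℕ)). Then the operator S_Ψ^{-1} T_Ψ U_Φ S_Φ^{-1} (that is, T_{Ψ̃} U_{Φ̃}, where Ψ̃ and Φ̃ are the canonical dual frames) is a right inverse of T_Φ U_Ψ: (T_Φ U_Ψ) ∘ (S_Ψ^{-1} T_Ψ U_Φ S_Φ^{-1}) = Id_H. -/
noncomputable section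

open ContinuousLinearMap
open scoped ComplexInnerProductSpace ENNReal

variable {H : Type*} [NormedAddCommGroup H] [InnerProductSpace ℂ H] [CompleteSpace H]

/-- Let Φ, Ψ be frames for H with `Range U_Φ ⊆ Range U_Ψ`.  Then
`S_Ψ^{-1} T_Ψ U_Φ S_Φ^{-1}` (= `T_{Ψ̃} U_{Φ̃}`) is a right inverse of `T_Φ U_Ψ`.  Here
`Sφinv`, `Sψinv` denote the inverses of the frame operators `S_Φ = adjoint Uφ ∘L Uφ` and
`S_Ψ = adjoint Uψ ∘L Uψ`. -/
theorem statement13 (φ ψ : ℕ → H) (hφ : IsFrame φ) (hψ : IsFrame ψ)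
    (Uφ Uψ : H →L[ℂ] Ltwo) (hUφ : IsAnalysisOp φ Uφ) (hUψ : IsAnalysisOp ψ Uψ)
    (Sφinv Sψinv : H →L[ℂ] H)
    (hSφ1 : (adjoint Uφ ∘L Uφ) ∘L Sφinv = 1) (hSφ2 : Sφinv ∘L (adjoint Uφ ∘L Uφ) = 1)
    (hSψ1 : (adjoint Uψ ∘L Uψ) ∘L Sψinv = 1) (hSψ2 : Sψinv ∘L (adjoint Uψ ∘L Uψ) = 1)
    (hrange : Set.range (⇑Uφ) ⊆ Set.range (⇑Uψ)) :
    (adjoint Uφ ∘L Uψ) ∘L (Sψinv ∘L (adjoint Uψ ∘L (Uφ ∘L Sφinv))) = 1 := by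
  ext f
  obtain ⟨g, hg⟩ := hrange (Set.mem_range_self (Sφinv f))
  have h1 : Sψinv ((adjoint Uψ) (Uφ (Sφinv f))) = g := by
    rw [← hg]
    simpa using congrArg (fun T : H →L[ℂ] H => T g) hSψ2
  simp only [ContinuousLinearMap.comp_apply, ContinuousLinearMap.one_apply]
  rw [h1, hg]
  simpa using congrArg (fun T : H →L[ℂ] H => T f) hSφ1
end
end

section
/- Let Φ = (φ_n)_n and Ψ = (ψ_n)_n be two frames for H such that Range(U_Φ) = Range(U_Ψ) (as subspaces of ℓ²(ℕ)). Then the operator T_Φ U_Ψ is invertible, so Φ and Ψ are g-dual frames; in particular, (T_Φ U_Ψ)^{-1} = T_{Ψ̃} U_{Φ̃} = S_Ψ^{-1} T_Ψ U_Φ S_Φ^{-1}, where Ψ̃ and Φ̃ are the canonical dual frames. -/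
noncomputable section

open ContinuousLinearMap
open scoped ComplexInnerProductSpace ENNReal

variable {H : Type*} [NormedAddCommGroup H] [InnerProductSpace ℂ H] [CompleteSpace H]

/-- Let Φ, Ψ be frames for H with `Range U_Φ = Range U_Ψ`.  Then `T_Φ U_Ψ` is
invertible (so Φ and Ψ are g-dual frames), and its inverse is
`T_{Ψ̃} U_{Φ̃} = S_Ψ^{-1} T_Ψ U_Φ S_Φ^{-1}`. -/
theorem statement14 (φ ψ : ℕ → H) (hφ : IsFrame φ) (hψ : IsFrame ψ)
    (Uφ Uψ : H →L[ℂ] Ltwo) (hUφ : IsAnalysisOp φ Uφ) (hUψ : IsAnalysisOp ψ Uψ)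
    (Sφinv Sψinv : H →L[ℂ] H)
    (hSφ1 : (adjoint Uφ ∘L Uφ) ∘L Sφinv = 1) (hSφ2 : Sφinv ∘L (adjoint Uφ ∘L Uφ) = 1)
    (hSψ1 : (adjoint Uψ ∘L Uψ) ∘L Sψinv = 1) (hSψ2 : Sψinv ∘L (adjoint Uψ ∘L Uψ) = 1)
    (hrange : Set.range (⇑Uφ) = Set.range (⇑Uψ)) :
    IsUnit (adjoint Uφ ∘L Uψ) ∧
    (adjoint Uφ ∘L Uψ) ∘L (Sψinv ∘L (adjoint Uψ ∘L (Uφ ∘L Sφinv))) = 1 ∧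
    (Sψinv ∘L (adjoint Uψ ∘L (Uφ ∘L Sφinv))) ∘L (adjoint Uφ ∘L Uψ) = 1 := by
  have key1 : ∀ f : H, Uψ (Sψinv (adjoint Uψ (Uφ f))) = Uφ f := by
    intro f
    obtain ⟨g, hg⟩ : Uφ f ∈ Set.range (⇑Uψ) := by rw [← hrange]; exact ⟨f, rfl⟩
    have h := congrArg (fun T : H →L[ℂ] H => T g) hSψ2
    simp only [ContinuousLinearMap.comp_apply, ContinuousLinearMap.one_apply] at h
    rw [← hg, h]
  have key2 : ∀ f : H, Uφ (Sφinv (adjoint Uφ (Uψ f))) = Uψ f := by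
    intro f
    obtain ⟨g, hg⟩ : Uψ f ∈ Set.range (⇑Uφ) := by rw [hrange]; exact ⟨f, rfl⟩
    have h := congrArg (fun T : H →L[ℂ] H => T g) hSφ2
    simp only [ContinuousLinearMap.comp_apply, ContinuousLinearMap.one_apply] at h
    rw [← hg, h]
  have h1 : (adjoint Uφ ∘L Uψ) ∘L (Sψinv ∘L (adjoint Uψ ∘L (Uφ ∘L Sφinv))) = 1 := by
    ext f
    simp only [ContinuousLinearMap.comp_apply, ContinuousLinearMap.one_apply]
    rw [key1 (Sφinv f)]
    have h := congrArg (fun T : H →L[ℂ] H => T f) hSφ1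
    simpa only [ContinuousLinearMap.comp_apply, ContinuousLinearMap.one_apply] using h
  have h2 : (Sψinv ∘L (adjoint Uψ ∘L (Uφ ∘L Sφinv))) ∘L (adjoint Uφ ∘L Uψ) = 1 := by
    ext f
    simp only [ContinuousLinearMap.comp_apply, ContinuousLinearMap.one_apply]
    rw [key2 f]
    have h := congrArg (fun T : H →L[ℂ] H => T f) hSψ2
    simpa only [ContinuousLinearMap.comp_apply, ContinuousLinearMap.one_apply] using h
  exact ⟨⟨⟨adjoint Uφ ∘L Uψ, Sψinv ∘L (adjoint Uψ ∘L (Uφ ∘L Sφinv)), h1, h2⟩, rfl⟩, h1, h2⟩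
end
end

section
/- Let Φ = (φ_n)_n and Ψ = (ψ_n)_n be frames for H with upper frame (Bessel) bounds M_Φ and M_Ψ respectively, and suppose the difference sequence Φ − Ψ = (φ_n − ψ_n)_n is a Bessel sequence with Bessel bound M_{Φ−Ψ}. Then the frame operators satisfy ‖S_Φ − S_Ψ‖ ≤ √M_{Φ−Ψ} · (√M_Φ + √M_Ψ). -/
noncomputable section

open ContinuousLinearMap
open scoped ComplexInnerProductSpace ENNReal

variable {H : Type*} [NormedAddCommGroup H] [InnerProductSpace ℂ H] [CompleteSpace H]

lemma bessel_opNorm_le {φ : ℕ → H} {M : ℝ} (h : IsBesselBound φ M)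
    {U : H →L[ℂ] Ltwo} (hU : IsAnalysisOp φ U) : ‖U‖ ≤ Real.sqrt M := by
  refine U.opNorm_le_bound (Real.sqrt_nonneg M) (fun f => ?_)
  have hsq : ‖U f‖ ^ 2 = ∑' n, ‖(⟪φ n, f⟫ : ℂ)‖ ^ 2 := by
    have := lp.norm_rpow_eq_tsum (p := 2) (by norm_num) (U f)
    simp only [ENNReal.toReal_ofNat] at this
    rw [show ((2:ℝ)) = ((2:ℕ):ℝ) by norm_num] at this
    simp only [Real.rpow_natCast] at this
    rw [this]
    exact tsum_congr fun n => by rw [hU f n]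
  have hle : ‖U f‖ ^ 2 ≤ M * ‖f‖ ^ 2 := hsq ▸ (h f).2
  calc ‖U f‖ = Real.sqrt (‖U f‖ ^ 2) := by
        rw [Real.sqrt_sq (norm_nonneg _)]
    _ ≤ Real.sqrt (M * ‖f‖ ^ 2) := Real.sqrt_le_sqrt hle
    _ = Real.sqrt M * ‖f‖ := by
        rw [Real.sqrt_mul' _ (sq_nonneg _), Real.sqrt_sq (norm_nonneg _)]

/-- Let Φ, Ψ be frames for H with upper (Bessel) bounds M_Φ, M_Ψ, and suppose
Φ - Ψ is a Bessel sequence with bound M'.  Then the frame operators satisfy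
`‖S_Φ - S_Ψ‖ ≤ √M' (√M_Φ + √M_Ψ)`. -/
theorem statement18 (φ ψ : ℕ → H) (mφ Mφ mψ Mψ M' : ℝ)
    (hφ : IsFrameWith φ mφ Mφ) (hψ : IsFrameWith ψ mψ Mψ)
    (hdiff : IsBesselBound (fun n => φ n - ψ n) M')
    (Uφ Uψ : H →L[ℂ] Ltwo) (hUφ : IsAnalysisOp φ Uφ) (hUψ : IsAnalysisOp ψ Uψ) :
    ‖(adjoint Uφ ∘L Uφ) - (adjoint Uψ ∘L Uψ)‖ ≤
      Real.sqrt M' * (Real.sqrt Mφ + Real.sqrt Mψ) := by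
  have hD : IsAnalysisOp (fun n => φ n - ψ n) (Uφ - Uψ) := by
    intro f n
    simp only [ContinuousLinearMap.sub_apply, lp.coeFn_sub, Pi.sub_apply,
      hUφ f n, hUψ f n, inner_sub_left]
  have h1 : ‖Uφ - Uψ‖ ≤ Real.sqrt M' := bessel_opNorm_le hdiff hD
  have h2 : ‖Uφ‖ ≤ Real.sqrt Mφ := bessel_opNorm_le hφ.2.1 hUφ
  have h3 : ‖Uψ‖ ≤ Real.sqrt Mψ := bessel_opNorm_le hψ.2.1 hUψ
  have key : (adjoint Uφ ∘L Uφ) - (adjoint Uψ ∘L Uψ) =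
      (adjoint Uφ ∘L (Uφ - Uψ)) + (adjoint (Uφ - Uψ) ∘L Uψ) := by
    simp only [map_sub]
    ext f
    simp [ContinuousLinearMap.sub_apply, ContinuousLinearMap.add_apply, map_sub]
  rw [key]
  calc ‖(adjoint Uφ ∘L (Uφ - Uψ)) + (adjoint (Uφ - Uψ) ∘L Uψ)‖
      ≤ ‖adjoint Uφ ∘L (Uφ - Uψ)‖ + ‖adjoint (Uφ - Uψ) ∘L Uψ‖ := norm_add_le _ _
    _ ≤ ‖adjoint Uφ‖ * ‖Uφ - Uψ‖ + ‖adjoint (Uφ - Uψ)‖ * ‖Uψ‖ :=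
        add_le_add (opNorm_comp_le _ _) (opNorm_comp_le _ _)
    _ = ‖Uφ‖ * ‖Uφ - Uψ‖ + ‖Uφ - Uψ‖ * ‖Uψ‖ := by rw [LinearIsometryEquiv.norm_map, LinearIsometryEquiv.norm_map]
    _ ≤ Real.sqrt Mφ * Real.sqrt M' + Real.sqrt M' * Real.sqrt Mψ := by
        gcongr <;> first | exact norm_nonneg _ | assumption
    _ = Real.sqrt M' * (Real.sqrt Mφ + Real.sqrt Mψ) := by ring
end
end
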